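/- arXiv:2203.09677 — 3 statements merged into one kernel-verified Lean document; each statement's English description precedes it below -/
import Mathlib

section
/- For a stationary Markov measure μ on {0,1}^ℕ with positive transition matrix P, the Haar functions e_{[x]} (as defined below) are pairwise orthogonal in L²(μ): if x and y are distinct finite words then ∫ e_{[x]} e_{[y]} dμ = 0. -/
open MeasureTheory Real Filter

abbrev Omega (d : ℕ) := ℕ → Fin d

def shift {d : ℕ} (x : Omega d) : Omega d := fun n => x (n + 1)

def cons {d : ℕ} (a : Fin d) (x : Omega d) : Omega d := fun n =>
  match n with
  | 0 => a
  | Nat.succ k => x k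

def Ruelle {d : ℕ} (J : Omega d → ℝ) (f : Omega d → ℝ) (x : Omega d) : ℝ :=
  ∑ a : Fin d, J (cons a x) * f (cons a x)

def IsJacobian {d : ℕ} (J : Omega d → ℝ) : Prop :=
  Continuous J ∧ (∀ x, 0 < J x ∧ J x < 1) ∧ ∀ x, Ruelle J (fun _ => 1) x = 1

def IsGibbs {d : ℕ} (J : Omega d → ℝ) (μ : Measure (Omega d)) : Prop :=
  IsProbabilityMeasure μ ∧
    ∀ f : Omega d → ℝ, Continuous f → ∫ x, Ruelle J f x ∂μ = ∫ x, f x ∂μ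

def Cyl (w : List (Fin 2)) : Set (Omega 2) := {x | ∀ i, i < w.length → x i = w.getD i 0}

def Sh (y : Omega 2) : Omega 2 := cons 0 (shift y)

def chainProd (P : Fin 2 → Fin 2 → ℝ) : Fin 2 → List (Fin 2) → ℝ
  | _, [] => 1
  | a, b :: t => P a b * chainProd P b t

def markovWeight (pi : Fin 2 → ℝ) (P : Fin 2 → Fin 2 → ℝ) : List (Fin 2) → ℝ
  | [] => 1
  | a :: t => pi a * chainProd P a t

noncomputable def haarFun (μ : Measure (Omega 2)) (P : Fin 2 → Fin 2 → ℝ)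
    (w : List (Fin 2)) : Omega 2 → ℝ := fun y =>
  let l := w.getLast!
  (1 / Real.sqrt ((μ (Cyl w)).toReal)) *
    (Real.sqrt (P l 1 / P l 0) * Set.indicator (Cyl (w ++ [0])) (fun _ => (1 : ℝ)) y -
      Real.sqrt (P l 0 / P l 1) * Set.indicator (Cyl (w ++ [1])) (fun _ => (1 : ℝ)) y)

/-! The Haar function of `w` vanishes off `Cyl w`, is constant on each half `Cyl (w ++ [a])`,
and has mean zero because the Markov property splits `μ (Cyl w)` between the two halves in the
ratio `P l 0 : P l 1`. If `w` is a proper prefix of `w'`, then `Cyl w'` lies in one half of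
`Cyl w`, so the product is a constant multiple of the Haar function of `w'` and integrates to
zero; if neither word is a prefix of the other, the two cylinders are disjoint. -/

lemma measurableSet_cyl (w : List (Fin 2)) : MeasurableSet (Cyl w) := by
  simp only [Cyl, Set.ofPred_forall]
  exact MeasurableSet.iInter fun i => MeasurableSet.iInter fun _ =>
    measurableSet_eq_fun (measurable_pi_apply i) measurable_const

lemma cyl_subset_cyl_of_isPrefix {u v : List (Fin 2)} (h : u <+: v) : Cyl v ⊆ Cyl u := by
  intro x hx i hi
  rw [hx i (hi.trans_le h.length_le), List.getD_eq_getElem _ _ hi,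
    List.getD_eq_getElem _ _ (hi.trans_le h.length_le), h.getElem hi]

lemma isPrefix_of_mem_cyl {u v : List (Fin 2)} {x : Omega 2} (hu : x ∈ Cyl u) (hv : x ∈ Cyl v)
    (hlen : u.length ≤ v.length) : u <+: v := by
  rw [List.prefix_iff_eq_take]
  refine List.ext_getElem (by simp [hlen]) fun i hiu hiv => ?_
  have hi : i < v.length := by simp at hiv; omega
  have := (hu i hiu).symm.trans (hv i hi)
  rw [List.getD_eq_getElem _ _ hiu, List.getD_eq_getElem _ _ hi] at this
  rw [List.getElem_take]
  exact this

lemma disjoint_cyl_of_not_isPrefix {u v : List (Fin 2)} (huv : ¬u <+: v) (hvu : ¬v <+: u) :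
    Disjoint (Cyl u) (Cyl v) := by
  refine Set.disjoint_left.2 fun x hu hv => ?_
  rcases le_total u.length v.length with hlen | hlen
  · exact huv (isPrefix_of_mem_cyl hu hv hlen)
  · exact hvu (isPrefix_of_mem_cyl hv hu hlen)

lemma mem_cyl_append_singleton {w : List (Fin 2)} {a : Fin 2} {x : Omega 2} :
    x ∈ Cyl (w ++ [a]) ↔ x ∈ Cyl w ∧ x w.length = a := by
  constructor
  · intro h
    refine ⟨fun i hi => ?_, ?_⟩
    · rw [h i (by simp; omega), List.getD_append _ _ _ _ hi]
    · simp [h w.length (by simp)]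
  · rintro ⟨hw, ha⟩ i hi
    rcases Nat.lt_or_ge i w.length with h | h
    · rw [List.getD_append _ _ _ _ h]
      exact hw i h
    · obtain rfl : i = w.length := by simp at hi; omega
      simp [ha]

lemma chainProd_append_singleton (P : Fin 2 → Fin 2 → ℝ) (a b : Fin 2) (t : List (Fin 2)) :
    chainProd P a (t ++ [b]) = chainProd P a t * P (a :: t).getLast! b := by
  induction t generalizing a with
  | nil => simp [chainProd, List.getLast!]
  | cons c s ih =>
    simp only [List.cons_append, chainProd, ih c]
    simp [List.getLast!, mul_assoc]

lemma markovWeight_append_singleton (pi : Fin 2 → ℝ) (P : Fin 2 → Fin 2 → ℝ)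
    {w : List (Fin 2)} (hw : w ≠ []) (b : Fin 2) :
    markovWeight pi P (w ++ [b]) = markovWeight pi P w * P w.getLast! b := by
  obtain ⟨a, t, rfl⟩ := List.exists_cons_of_ne_nil hw
  simp only [List.cons_append, markovWeight, chainProd_append_singleton, mul_assoc]

lemma sqrt_div_mul_self {p q : ℝ} (hp : 0 < p) (hq : 0 ≤ q) : √(q / p) * p = √(q * p) := by
  calc √(q / p) * p = √(q / p) * √(p ^ 2) := by rw [Real.sqrt_sq hp.le]
    _ = √(q / p * p ^ 2) := (Real.sqrt_mul (by positivity) _).symm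
    _ = √(q * p) := by congr 1; field_simp

section Haar

variable {μ : Measure (Omega 2)} {P : Fin 2 → Fin 2 → ℝ} {w : List (Fin 2)}

lemma haarFun_eq_zero_of_notMem {y : Omega 2} (hy : y ∉ Cyl w) : haarFun μ P w y = 0 := by
  have h (b : Fin 2) : y ∉ Cyl (w ++ [b]) := fun hb =>
    hy (cyl_subset_cyl_of_isPrefix (List.prefix_append w [b]) hb)
  simp [haarFun, Set.indicator_of_notMem (h _)]

lemma haarFun_eq_of_mem_cyl_append_singleton {a : Fin 2} {y z : Omega 2}
    (hy : y ∈ Cyl (w ++ [a])) (hz : z ∈ Cyl (w ++ [a])) : haarFun μ P w y = haarFun μ P w z := by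
  rw [mem_cyl_append_singleton] at hy hz
  have h (b : Fin 2) : (Cyl (w ++ [b])).indicator (fun _ => (1 : ℝ)) y =
      (Cyl (w ++ [b])).indicator (fun _ => 1) z := by
    simp only [Set.indicator, mem_cyl_append_singleton, hy.1, hz.1, hy.2, hz.2, true_and]
  simp only [haarFun, h]

lemma integral_haarFun_eq_zero [IsFiniteMeasure μ]
    (hP0 : 0 < P w.getLast! 0) (hP1 : 0 < P w.getLast! 1)
    (hmarkov : ∀ b, (μ (Cyl (w ++ [b]))).toReal = (μ (Cyl w)).toReal * P w.getLast! b) :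
    ∫ y, haarFun μ P w y ∂μ = 0 := by
  have hint (b : Fin 2) : Integrable ((Cyl (w ++ [b])).indicator fun _ => (1 : ℝ)) μ :=
    (integrable_const 1).indicator (measurableSet_cyl _)
  have hsqrt : √(P w.getLast! 1 / P w.getLast! 0) * P w.getLast! 0 =
      √(P w.getLast! 0 / P w.getLast! 1) * P w.getLast! 1 := by
    rw [sqrt_div_mul_self hP0 hP1.le, sqrt_div_mul_self hP1 hP0.le, mul_comm]
  simp only [haarFun]
  rw [integral_const_mul, integral_sub ((hint 0).const_mul _) ((hint 1).const_mul _),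
    integral_const_mul, integral_const_mul, integral_indicator_const _ (measurableSet_cyl _),
    integral_indicator_const _ (measurableSet_cyl _)]
  simp only [smul_eq_mul, mul_one, measureReal_def, hmarkov]
  linear_combination (1 / √(μ (Cyl w)).toReal * (μ (Cyl w)).toReal) * hsqrt

lemma integral_haarFun_mul_eq_zero_of_isPrefix {w' : List (Fin 2)} (h : w <+: w') (hne : w ≠ w')
    (hmean : ∫ y, haarFun μ P w' y ∂μ = 0) :
    ∫ y, haarFun μ P w y * haarFun μ P w' y ∂μ = 0 := by
  obtain ⟨t, rfl⟩ := h
  obtain ⟨a, s, rfl⟩ := List.exists_cons_of_ne_nil (by rintro rfl; simp at hne : t ≠ [])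
  have hsub : Cyl (w ++ a :: s) ⊆ Cyl (w ++ [a]) := cyl_subset_cyl_of_isPrefix ⟨s, by simp⟩
  let z : Omega 2 := fun i => (w ++ a :: s).getD i 0
  have hz : z ∈ Cyl (w ++ a :: s) := fun _ _ => rfl
  have hconst (y : Omega 2) : haarFun μ P w y * haarFun μ P (w ++ a :: s) y =
      haarFun μ P w z * haarFun μ P (w ++ a :: s) y := by
    by_cases hy : y ∈ Cyl (w ++ a :: s)
    · rw [haarFun_eq_of_mem_cyl_append_singleton (hsub hy) (hsub hz)]
    · simp [haarFun_eq_zero_of_notMem hy]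
  simp_rw [hconst]
  rw [integral_const_mul, hmean, mul_zero]

lemma haarFun_mul_eq_zero_of_disjoint {w' : List (Fin 2)} (h : Disjoint (Cyl w) (Cyl w'))
    (y : Omega 2) : haarFun μ P w y * haarFun μ P w' y = 0 := by
  by_cases hy : y ∈ Cyl w
  · simp [haarFun_eq_zero_of_notMem (Set.disjoint_left.1 h hy)]
  · simp [haarFun_eq_zero_of_notMem hy]

end Haar

theorem haar_pairwise_orthogonal_general (P : Fin 2 → Fin 2 → ℝ) (pi : Fin 2 → ℝ)
    (hP : ∀ i j, 0 < P i j)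
    (μ : Measure (Omega 2)) (hprob : IsProbabilityMeasure μ)
    (hμ : ∀ w : List (Fin 2), (μ (Cyl w)).toReal = markovWeight pi P w) :
    ∀ w w' : List (Fin 2), w ≠ [] → w' ≠ [] → w ≠ w' →
      ∫ y, haarFun μ P w y * haarFun μ P w' y ∂μ = 0 := by
  intro w w' hw hw' hne
  have hmean {v : List (Fin 2)} (hv : v ≠ []) : ∫ y, haarFun μ P v y ∂μ = 0 :=
    integral_haarFun_eq_zero (hP _ _) (hP _ _) fun b => by
      rw [hμ, hμ, markovWeight_append_singleton pi P hv]
  by_cases h : w <+: w'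
  · exact integral_haarFun_mul_eq_zero_of_isPrefix h hne (hmean hw')
  by_cases h' : w' <+: w
  · simp_rw [mul_comm (haarFun μ P w _)]
    exact integral_haarFun_mul_eq_zero_of_isPrefix h' hne.symm (hmean hw)
  simp [haarFun_mul_eq_zero_of_disjoint (disjoint_cyl_of_not_isPrefix h h')]

theorem haar_pairwise_orthogonal (P : Fin 2 → Fin 2 → ℝ) (pi : Fin 2 → ℝ)
    (hP : ∀ i j, 0 < P i j) (hrow : ∀ i, P i 0 + P i 1 = 1)
    (hpi : ∀ i, 0 < pi i) (hpisum : pi 0 + pi 1 = 1)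
    (hstat : ∀ j, pi 0 * P 0 j + pi 1 * P 1 j = pi j)
    (μ : Measure (Omega 2)) (hprob : IsProbabilityMeasure μ)
    (hμ : ∀ w : List (Fin 2), (μ (Cyl w)).toReal = markovWeight pi P w) :
    ∀ w w' : List (Fin 2), w ≠ [] → w' ≠ [] → w ≠ w' →
      ∫ y, haarFun μ P w y * haarFun μ P w' y ∂μ = 0 :=
  haar_pairwise_orthogonal_general P pi hP μ hprob hμ
end

section
/- For the measure of maximal entropy μ (the (1/2,1/2)-Bernoulli measure) on {0,1}^ℕ, the functions β_n defined by: β_1 = 1_{[0]} - 1_{[1]}, and for n ≥ 2, β_n(y) = α_n(y) for y ∈ [0] and β_n(y) = -α_n(𝔖(y)) for y ∈ [1] — where α_n takes value +1 on cylinders of length n in even position and -1 on cylinders in odd position of the lexicographic order — satisfy L_{-log 2}(β_n) = 0 for all n ≥ 1, have L²(μ)-norm 1, and are pairwise orthogonal: ∫ β_n β_m dμ = 0 for n ≠ m. -/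
open MeasureTheory Real Filter

def lexIdx (n : ℕ) (y : Omega 2) : ℕ := ∑ i ∈ Finset.range n, (y i).val * 2 ^ (n - 1 - i)

noncomputable def alphaFun (n : ℕ) (y : Omega 2) : ℝ := if lexIdx n y % 2 = 0 then -1 else 1

noncomputable def betaFun (n : ℕ) (y : Omega 2) : ℝ :=
  if n = 1 then (if y 0 = 0 then 1 else -1)
  else if y 0 = 0 then alphaFun n y else -alphaFun n (Sh y)

/-!
Writing `s(0) = 1`, `s(1) = -1`, one has `β₁(y) = s(y₀)` and `βₙ(y) = -s(y₀) s(yₙ₋₁)` for `n ≥ 2`,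
because the parity of the lexicographic position of a length-`n` cylinder is its last letter, and
`𝔖` does not touch the letter `yₙ₋₁`. Hence `βₙ² = 1`, and `L βₙ = 0` since `L` averages over the
letter `y₀`. For `n < m`, `βₙ βₘ` is a function of `y₀, …, yₘ₋₂` times `s(yₘ₋₁)`; under the
Bernoulli measure the letter `yₘ₋₁` is a fair sign independent of the earlier ones, so the
integral vanishes.
-/

def bitSign (a : Fin 2) : ℝ := if a = 0 then 1 else -1

@[simp] lemma bitSign_zero : bitSign 0 = 1 := rfl

@[simp] lemma bitSign_one : bitSign 1 = -1 := by norm_num [bitSign]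

lemma bitSign_add_one (a : Fin 2) : bitSign (a + 1) = -bitSign a := by
  fin_cases a <;> simp

lemma lexIdx_mod_two {n : ℕ} (hn : n ≠ 0) (y : Omega 2) : lexIdx n y % 2 = (y (n - 1)).val := by
  obtain ⟨k, rfl⟩ := Nat.exists_eq_succ_of_ne_zero hn
  have hdvd : 2 ∣ ∑ i ∈ Finset.range k, (y i).val * 2 ^ (k - i) :=
    Finset.dvd_sum fun i hi =>
      (dvd_pow_self 2 (by simp at hi; omega)).mul_left _
  have hlast := (y k).isLt
  simp only [lexIdx, Finset.sum_range_succ, Nat.succ_sub_one, Nat.sub_self, pow_zero, mul_one]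
  omega

lemma alphaFun_eq {n : ℕ} (hn : n ≠ 0) (y : Omega 2) : alphaFun n y = -bitSign (y (n - 1)) := by
  rw [alphaFun, lexIdx_mod_two hn]
  generalize y (n - 1) = a
  fin_cases a <;> simp

lemma betaFun_one (y : Omega 2) : betaFun 1 y = bitSign (y 0) := by
  simp [betaFun, bitSign]

lemma betaFun_of_two_le {n : ℕ} (hn : 2 ≤ n) (y : Omega 2) :
    betaFun n y = -(bitSign (y 0) * bitSign (y (n - 1))) := by
  have hSh : Sh y (n - 1) = y (n - 1) := by
    obtain ⟨k, hk⟩ : ∃ k, n - 1 = k + 1 := ⟨n - 2, by omega⟩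
    rw [hk]; rfl
  rw [betaFun, if_neg (by omega)]
  split_ifs with h0
  · simp [alphaFun_eq (show n ≠ 0 by omega), h0]
  · have h1 : y 0 = 1 := Fin.eq_one_of_ne_zero _ h0
    simp [alphaFun_eq (show n ≠ 0 by omega), hSh, h1]

lemma betaFun_congr {n : ℕ} (hn : 1 ≤ n) {y z : Omega 2} (h0 : y 0 = z 0)
    (hlast : y (n - 1) = z (n - 1)) : betaFun n y = betaFun n z := by
  rcases (show n = 1 ∨ 2 ≤ n by omega) with rfl | hn2
  · rw [betaFun_one, betaFun_one, h0]
  · rw [betaFun_of_two_le hn2, betaFun_of_two_le hn2, h0, hlast]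

lemma betaFun_sq (n : ℕ) (y : Omega 2) : betaFun n y ^ 2 = 1 := by
  unfold betaFun alphaFun
  split_ifs <;> norm_num

lemma ruelle_half (f : Omega 2 → ℝ) (x : Omega 2) :
    Ruelle (fun _ => (1 : ℝ) / 2) f x = (f (cons 0 x) + f (cons 1 x)) / 2 := by
  simp only [Ruelle, Fin.sum_univ_two]
  ring

lemma ruelle_half_betaFun {n : ℕ} (hn : 1 ≤ n) (x : Omega 2) :
    Ruelle (fun _ => (1 : ℝ) / 2) (betaFun n) x = 0 := by
  rw [ruelle_half]
  rcases (show n = 1 ∨ 2 ≤ n by omega) with rfl | hn2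
  · simp [betaFun_one, cons]
  · obtain ⟨k, hk⟩ : ∃ k, n - 1 = k + 1 := ⟨n - 2, by omega⟩
    have hcons : ∀ a : Fin 2, cons a x (n - 1) = x k := fun a => by rw [hk]; rfl
    simp only [betaFun_of_two_le hn2, hcons]
    simp [cons]

def padZero {N : ℕ} (v : Fin N → Fin 2) : Omega 2 := fun i => if h : i < N then v ⟨i, h⟩ else 0

lemma padZero_of_lt {N : ℕ} (v : Fin N → Fin 2) {i : ℕ} (hi : i < N) : padZero v i = v ⟨i, hi⟩ :=
  dif_pos hi

lemma mem_cyl_ofFn_iff {N : ℕ} (v : Fin N → Fin 2) (y : Omega 2) :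
    y ∈ Cyl (List.ofFn v) ↔ (fun i : Fin N => y i) = v := by
  simp only [Cyl, Set.mem_ofPred_eq, List.length_ofFn, List.getD_eq_getElem?_getD,
    List.getElem?_ofFn, funext_iff, Fin.forall_iff]
  exact forall_congr' fun i => forall_congr' fun hi => by simp [hi]

lemma eq_sum_indicator_cyl {N : ℕ} {f : Omega 2 → ℝ}
    (hf : ∀ y z : Omega 2, (∀ i < N, y i = z i) → f y = f z) (y : Omega 2) :
    f y = ∑ v : Fin N → Fin 2, (Cyl (List.ofFn v)).indicator (fun _ => f (padZero v)) y := by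
  rw [Finset.sum_eq_single_of_mem (fun i : Fin N => y i) (Finset.mem_univ _)]
  · rw [Set.indicator_of_mem ((mem_cyl_ofFn_iff _ y).mpr rfl)]
    exact hf _ _ fun i hi => by simp [padZero, hi]
  · intro v _ hv
    exact Set.indicator_of_notMem (fun hy => hv ((mem_cyl_ofFn_iff v y).mp hy).symm) _

lemma integral_eq_sum_padZero (μ : Measure (Omega 2)) [IsFiniteMeasure μ]
    (hμ : ∀ w : List (Fin 2), (μ (Cyl w)).toReal = (1 / 2) ^ w.length) {N : ℕ}
    {f : Omega 2 → ℝ} (hf : ∀ y z : Omega 2, (∀ i < N, y i = z i) → f y = f z) :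
    ∫ y, f y ∂μ = ∑ v : Fin N → Fin 2, f (padZero v) * (1 / 2) ^ N := by
  rw [integral_congr_ae (Eventually.of_forall (eq_sum_indicator_cyl hf)),
    integral_finsetSum _ fun v _ => (integrable_const _).indicator (measurableSet_cyl _)]
  refine Finset.sum_congr rfl fun v _ => ?_
  rw [integral_indicator_const _ (measurableSet_cyl _), measureReal_def, hμ, List.length_ofFn,
    smul_eq_mul, mul_comm]

/-- Flipping the letter `j` is an involution of the words that reverses the sign of `s(v j)`. -/
lemma sum_mul_bitSign_eq_zero {ι : Type*} [Fintype ι] [DecidableEq ι] (j : ι)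
    (G : (ι → Fin 2) → ℝ) (hG : ∀ v a, G (Function.update v j a) = G v) :
    ∑ v : ι → Fin 2, G v * bitSign (v j) = 0 := by
  let flip : (ι → Fin 2) → (ι → Fin 2) := fun v => Function.update v j (v j + 1)
  have hflip : Function.Involutive flip := fun v => by
    funext k
    by_cases hk : k = j
    · subst hk
      simp only [flip, Function.update_self]
      generalize v k = a
      fin_cases a <;> rfl
    · simp [flip, Function.update_of_ne hk]
  have hflip_term : ∀ v, G (flip v) * bitSign (flip v j) = -(G v * bitSign (v j)) := fun v => by
    simp only [flip, hG, Function.update_self, bitSign_add_one, mul_neg]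
  have hsum := Equiv.sum_comp (hflip.toPerm flip) fun v => G v * bitSign (v j)
  simp only [Function.Involutive.coe_toPerm, hflip_term, Finset.sum_neg_distrib] at hsum
  linarith

lemma integral_mul_bitSign_eq_zero (μ : Measure (Omega 2)) [IsFiniteMeasure μ]
    (hμ : ∀ w : List (Fin 2), (μ (Cyl w)).toReal = (1 / 2) ^ w.length) {j : ℕ}
    {g : Omega 2 → ℝ} (hg : ∀ y z : Omega 2, (∀ i < j, y i = z i) → g y = g z) :
    ∫ y, g y * bitSign (y j) ∂μ = 0 := by
  have hdep : ∀ y z : Omega 2, (∀ i < j + 1, y i = z i) →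
      g y * bitSign (y j) = g z * bitSign (z j) := fun y z h => by
    rw [hg y z fun i hi => h i (by omega), h j (by omega)]
  rw [integral_eq_sum_padZero μ hμ hdep, ← Finset.sum_mul]
  refine mul_eq_zero_of_left ?_ _
  simp only [padZero_of_lt _ (Nat.lt_succ_self j)]
  refine sum_mul_bitSign_eq_zero (Fin.last j) (fun v => g (padZero v)) fun v a => ?_
  refine hg _ _ fun i hi => ?_
  rw [padZero_of_lt _ (by omega), padZero_of_lt _ (by omega),
    Function.update_of_ne (Fin.ne_of_lt (by simpa [Fin.lt_def] using hi))]

lemma integral_betaFun_mul_betaFun_of_lt (μ : Measure (Omega 2)) [IsFiniteMeasure μ]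
    (hμ : ∀ w : List (Fin 2), (μ (Cyl w)).toReal = (1 / 2) ^ w.length) {n m : ℕ} (hn : 1 ≤ n)
    (hnm : n < m) : ∫ y, betaFun n y * betaFun m y ∂μ = 0 := by
  have hsplit : ∀ y : Omega 2, betaFun n y * betaFun m y
      = (betaFun n y * -bitSign (y 0)) * bitSign (y (m - 1)) := fun y => by
    rw [betaFun_of_two_le (n := m) (by omega)]
    ring
  simp only [hsplit]
  refine integral_mul_bitSign_eq_zero μ hμ fun y z h => ?_
  rw [betaFun_congr hn (h 0 (by omega)) (h (n - 1) (by omega)), h 0 (by omega)]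

theorem beta_kernel_orthonormal (μ : Measure (Omega 2)) (hprob : IsProbabilityMeasure μ)
    (hμ : ∀ w : List (Fin 2), (μ (Cyl w)).toReal = (1 / 2) ^ w.length) :
    ∀ n : ℕ, 1 ≤ n →
      (∀ x : Omega 2, Ruelle (fun _ => (1 : ℝ) / 2) (betaFun n) x = 0) ∧
        (∫ y, (betaFun n y) ^ 2 ∂μ = 1) ∧
          ∀ m : ℕ, 1 ≤ m → n ≠ m → ∫ y, betaFun n y * betaFun m y ∂μ = 0 := by
  intro n hn
  refine ⟨ruelle_half_betaFun hn, by simp [betaFun_sq], fun m hm hne => ?_⟩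
  rcases hne.lt_or_gt with hlt | hgt
  · exact integral_betaFun_mul_betaFun_of_lt μ hμ hn hlt
  · simp only [mul_comm (betaFun n _)]
    exact integral_betaFun_mul_betaFun_of_lt μ hμ hm hgt
end

section
/- In the family of two-state Markov measures: there exist row-stochastic 2×2 positive matrices P^0, P^1, P^2 with stationary Markov measures μ0, μ1, μ2 and Jacobians J0, J1, J2 (J_j constant on two-cylinders, J_j(x) = P^j_{x_2,x_1}) such that ∫(log J0 - log J1)·((J2 - J0)/J0) dμ0 > 0 (the Second-Law condition) while the Pythagorean quantity ∫(log J1 - log J0) dμ0 + ∫(log J0 - log J1) dμ2 is strictly negative; i.e., the Second-Law condition does not imply the Pythagorean inequality D_KL(μ2,μ1) ≥ D_KL(μ2,μ0) + D_KL(μ0,μ1). In particular one may take P^0 with diagonal (0.2, 0.2), P^1 with diagonal (0.15, 0.92), P^2 with diagonal (0.9, 0.12). -/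
open MeasureTheory Real Filter

def JofP (P : Fin 2 → Fin 2 → ℝ) : Omega 2 → ℝ := fun x => P (x 1) (x 0)

def IsStochastic (P : Fin 2 → Fin 2 → ℝ) : Prop :=
  (∀ i j, 0 < P i j) ∧ ∀ i, P i 0 + P i 1 = 1

def IsStationaryFor (pi : Fin 2 → ℝ) (P : Fin 2 → Fin 2 → ℝ) : Prop :=
  (∀ i, 0 < pi i) ∧ pi 0 + pi 1 = 1 ∧ ∀ j, pi 0 * P 0 j + pi 1 * P 1 j = pi j

def IsMarkovMeasure (μ : Measure (Omega 2)) (pi : Fin 2 → ℝ)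
    (P : Fin 2 → Fin 2 → ℝ) : Prop :=
  IsProbabilityMeasure μ ∧ ∀ w : List (Fin 2), (μ (Cyl w)).toReal = markovWeight pi P w

/-! Each Markov measure is realized as the law of the chain `X₀ = f(U₀)`, `Xₙ₊₁ = g(Xₙ, Uₙ₊₁)`
driven by i.i.d. uniform variables on `[0, 1]`, so that cylinder probabilities factor into products
of transition probabilities. The Second-Law sum is positive term by term, because `P²` moves every
transition probability of `P⁰` away from that of `P¹`, so `log P⁰ - log P¹` and `P² - P⁰` have the
same sign. In the Pythagorean sum the transition `1 → 0`, where `P¹` is ten times smaller than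
`P⁰`, contributes about `-0.31 log 10`, which outweighs the rest once the other terms are bounded
by `1 - 1 / x ≤ log x ≤ x - 1`. -/

open Finset unitInterval

namespace TwoStateMarkov

section TwoStateMatrix

def twoStateMatrix (p q : ℝ) : Fin 2 → Fin 2 → ℝ := ![![p, 1 - p], ![1 - q, q]]

noncomputable def twoStateStationary (p q : ℝ) : Fin 2 → ℝ :=
  ![(1 - q) / (2 - p - q), (1 - p) / (2 - p - q)]

variable {p q : ℝ}

lemma isStochastic_twoStateMatrix (hp : p ∈ Set.Ioo 0 1) (hq : q ∈ Set.Ioo 0 1) :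
    IsStochastic (twoStateMatrix p q) := by
  obtain ⟨hp0, hp1⟩ := hp
  obtain ⟨hq0, hq1⟩ := hq
  refine ⟨fun i j => ?_, fun i => ?_⟩
  · fin_cases i <;> fin_cases j <;> simp [twoStateMatrix] <;> linarith
  · fin_cases i <;> simp [twoStateMatrix]

lemma isStationaryFor_twoStateStationary (hp : p < 1) (hq : q < 1) :
    IsStationaryFor (twoStateStationary p q) (twoStateMatrix p q) := by
  have hd : 2 - p - q ≠ 0 := by linarith
  refine ⟨fun i => ?_, ?_, fun j => ?_⟩
  · fin_cases i <;> simp [twoStateStationary] <;> apply div_pos <;> linarith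
  · simp [twoStateStationary]
    field_simp
    ring
  · fin_cases j <;> simp [twoStateStationary, twoStateMatrix] <;> field_simp <;> ring

end TwoStateMatrix

lemma chainProd_eq_prod (P : Fin 2 → Fin 2 → ℝ) (a : Fin 2) (t : List (Fin 2)) :
    chainProd P a t =
      ∏ i ∈ range t.length, P ((a :: t).getD i 0) ((a :: t).getD (i + 1) 0) := by
  induction t generalizing a with
  | nil => simp [chainProd]
  | cons b t ih =>
    rw [chainProd, ih b, List.length_cons, prod_range_succ']
    simp only [List.getD_cons_succ, List.getD_cons_zero]
    ring

lemma measurableSet_cyl (w : List (Fin 2)) : MeasurableSet (Cyl w) := by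
  have : Cyl w = ⋂ i ∈ Set.Iio w.length, (fun x : Omega 2 => x i) ⁻¹' {w.getD i 0} := by
    ext x
    simp [Cyl]
  rw [this]
  exact .biInter (Set.to_countable _) fun i _ => measurable_pi_apply i (measurableSet_singleton _)

section RandomDynamics

variable {Z : Type*} (init : Z → Fin 2) (step : Fin 2 → Z → Fin 2)

def trajectory (u : ℕ → Z) : Omega 2
  | 0 => init (u 0)
  | n + 1 => step (trajectory u n) (u (n + 1))

def stepSet (w : ℕ → Fin 2) : ℕ → Set Z
  | 0 => init ⁻¹' {w 0}
  | i + 1 => step (w i) ⁻¹' {w (i + 1)}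

lemma trajectory_eq_iff (w : ℕ → Fin 2) (u : ℕ → Z) (n : ℕ) :
    (∀ i < n, trajectory init step u i = w i) ↔ ∀ i < n, u i ∈ stepSet init step w i := by
  induction n with
  | zero => simp
  | succ n ih =>
    simp only [Nat.lt_succ_iff_lt_or_eq, or_imp, forall_and, forall_eq]
    rw [← ih]
    refine and_congr_right fun h => ?_
    cases n with
    | zero => rfl
    | succ m => simp [trajectory, stepSet, h m (by omega)]

variable [MeasurableSpace Z] {init step}

lemma measurable_trajectory (hinit : Measurable init) (hstep : ∀ a, Measurable (step a)) :
    Measurable (trajectory init step) := by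
  refine measurable_pi_lambda _ fun n => ?_
  induction n with
  | zero => exact hinit.comp (measurable_pi_apply 0)
  | succ n ih =>
    exact (measurable_from_prod_countable_left (f := fun p : Z × Fin 2 => step p.2 p.1) hstep).comp
      ((measurable_pi_apply _).prodMk ih)

lemma measurableSet_stepSet (hinit : Measurable init) (hstep : ∀ a, Measurable (step a))
    (w : ℕ → Fin 2) (i : ℕ) : MeasurableSet (stepSet init step w i) := by
  cases i with
  | zero => exact hinit (measurableSet_singleton _)
  | succ i => exact hstep _ (measurableSet_singleton _)

lemma isMarkovMeasure_map_trajectory (ν : Measure Z) [IsProbabilityMeasure ν]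
    {pi : Fin 2 → ℝ} {P : Fin 2 → Fin 2 → ℝ}
    (hinit_meas : Measurable init) (hstep_meas : ∀ a, Measurable (step a))
    (hinit : ∀ a, ν.real (init ⁻¹' {a}) = pi a)
    (hstep : ∀ a b, ν.real (step a ⁻¹' {b}) = P a b) :
    IsMarkovMeasure ((Measure.infinitePi fun _ : ℕ => ν).map (trajectory init step)) pi P := by
  have hmeas := measurable_trajectory hinit_meas hstep_meas
  refine ⟨Measure.isProbabilityMeasure_map hmeas.aemeasurable, fun w => ?_⟩
  have hpre : trajectory init step ⁻¹' Cyl w =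
      Set.pi ↑(range w.length) (stepSet init step (w.getD · 0)) := by
    ext u
    simpa [Cyl] using trajectory_eq_iff init step (w.getD · 0) u w.length
  rw [Measure.map_apply hmeas (measurableSet_cyl w), hpre,
    Measure.infinitePi_pi _ fun i _ => measurableSet_stepSet hinit_meas hstep_meas _ i,
    ENNReal.toReal_prod]
  cases w with
  | nil => simp [markovWeight]
  | cons a t =>
    rw [List.length_cons, prod_range_succ', markovWeight, chainProd_eq_prod, mul_comm]
    simp [stepSet, ← measureReal_def, hinit, hstep]

end RandomDynamics

lemma exists_measurable_volume_real_preimage_eq {v : Fin 2 → ℝ} (hv : ∀ i, 0 ≤ v i)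
    (hv1 : v 0 + v 1 = 1) :
    ∃ f : I → Fin 2, Measurable f ∧ ∀ b, volume.real (f ⁻¹' {b}) = v b := by
  let c : I := ⟨v 0, hv 0, by linarith [hv 1]⟩
  let f : I → Fin 2 := fun z => if z < c then 0 else 1
  have hf0 : f ⁻¹' {0} = Set.Iio c := by
    ext z
    by_cases h : z < c <;> simp [f, h]
  have hf1 : f ⁻¹' {1} = Set.Ici c := by
    ext z
    by_cases h : z < c <;> simp [f, h, not_lt.mp]
  refine ⟨f, Measurable.ite measurableSet_Iio measurable_const measurable_const,
    Fin.forall_fin_two.2 ⟨?_, ?_⟩⟩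
  · rw [measureReal_def, hf0, unitInterval.volume_Iio, ENNReal.toReal_ofReal (hv 0)]
  · rw [measureReal_def, hf1, unitInterval.volume_Ici, ENNReal.toReal_ofReal (by linarith [hv 1])]
    simp only [c]
    linarith

theorem exists_isMarkovMeasure {pi : Fin 2 → ℝ} {P : Fin 2 → Fin 2 → ℝ}
    (hpi : ∀ i, 0 ≤ pi i) (hpi1 : pi 0 + pi 1 = 1)
    (hP : ∀ i j, 0 ≤ P i j) (hP1 : ∀ i, P i 0 + P i 1 = 1) :
    ∃ μ, IsMarkovMeasure μ pi P := by
  obtain ⟨init, hinit_meas, hinit⟩ := exists_measurable_volume_real_preimage_eq hpi hpi1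
  choose step hstep_meas hstep using
    fun a => exists_measurable_volume_real_preimage_eq (hP a) (hP1 a)
  exact ⟨_, isMarkovMeasure_map_trajectory volume hinit_meas hstep_meas hinit hstep⟩

lemma integral_eq_sum_twoCylinders {μ : Measure (Omega 2)} {pi : Fin 2 → ℝ}
    {P : Fin 2 → Fin 2 → ℝ} (hμ : IsMarkovMeasure μ pi P) (F : Fin 2 → Fin 2 → ℝ) :
    ∫ x, F (x 1) (x 0) ∂μ = ∑ r, ∑ s, pi r * P r s * F s r := by
  have := hμ.1
  let g : Omega 2 → Fin 2 × Fin 2 := fun x => (x 0, x 1)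
  have hg : Measurable g := (measurable_pi_apply 0).prodMk (measurable_pi_apply 1)
  have hcyl : ∀ r s, g ⁻¹' {(r, s)} = Cyl [r, s] := by
    intro r s
    ext x
    simp [g, Cyl, Nat.le_one_iff_eq_zero_or_eq_one, or_imp, forall_and]
  calc ∫ x, F (x 1) (x 0) ∂μ = ∫ p, F p.2 p.1 ∂(μ.map g) :=
        (integral_map hg.aemeasurable
          (measurable_of_countable fun p : Fin 2 × Fin 2 => F p.2 p.1).aestronglyMeasurable).symm
    _ = ∑ p, (μ.map g).real {p} • F p.2 p.1 := integral_fintype (.of_finite)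
    _ = ∑ r, ∑ s, pi r * P r s * F s r := by
        rw [Fintype.sum_prod_type]
        refine sum_congr rfl fun r _ => sum_congr rfl fun s _ => ?_
        rw [map_measureReal_apply hg (measurableSet_singleton _), hcyl, measureReal_def, hμ.2]
        simp [markovWeight, chainProd]

lemma log_sub_log_mul_sub_pos {a b c : ℝ} (ha : 0 < a) (hb : 0 < b) (h : 0 < (a - b) * (c - a)) :
    0 < (log a - log b) * (c - a) := by
  rcases lt_trichotomy a b with hab | rfl | hab
  · exact mul_pos_of_neg_of_neg (sub_neg.2 (log_lt_log ha hab))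
      (neg_of_mul_pos_right h (sub_neg.2 hab).le)
  · simp at h
  · exact mul_pos (sub_pos.2 (log_lt_log hb hab)) (pos_of_mul_pos_right h (sub_pos.2 hab).le)

lemma secondLaw_sum_pos {ι : Type*} [Fintype ι] [Nonempty ι] {pi : ι → ℝ}
    {P₀ P₁ P₂ : ι → ι → ℝ} (hpi : ∀ i, 0 < pi i) (hP₀ : ∀ i j, 0 < P₀ i j)
    (hP₁ : ∀ i j, 0 < P₁ i j) (h : ∀ i j, 0 < (P₀ i j - P₁ i j) * (P₂ i j - P₀ i j)) :
    0 < ∑ r, ∑ s, pi r * P₀ r s *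
      ((log (P₀ s r) - log (P₁ s r)) * ((P₂ s r - P₀ s r) / P₀ s r)) := by
  refine sum_pos (fun r _ => sum_pos (fun s _ => ?_) univ_nonempty) univ_nonempty
  rw [← mul_div_assoc]
  exact mul_pos (mul_pos (hpi r) (hP₀ r s))
    (div_pos (log_sub_log_mul_sub_pos (hP₀ s r) (hP₁ s r) (h s r)) (hP₀ s r))

lemma log_sub_log_le {a b : ℝ} (ha : 0 < a) (hb : 0 < b) : log a - log b ≤ a / b - 1 := by
  rw [← log_div ha.ne' hb.ne']
  exact log_le_sub_one_of_pos (div_pos ha hb)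

lemma one_sub_div_le_log_sub_log {a b : ℝ} (ha : 0 < a) (hb : 0 < b) :
    1 - b / a ≤ log a - log b := by
  rw [← log_div ha.ne' hb.ne', ← inv_div]
  exact one_sub_inv_le_log_of_pos (div_pos ha hb)

lemma two_lt_log_ten : 2 < log 10 := by
  rw [lt_log_iff_exp_lt (by norm_num), show (2 : ℝ) = 1 + 1 by norm_num, exp_add]
  nlinarith [exp_one_lt_d9, exp_pos 1]

noncomputable def P₀ : Fin 2 → Fin 2 → ℝ := twoStateMatrix 0.2 0.2
noncomputable def P₁ : Fin 2 → Fin 2 → ℝ := twoStateMatrix 0.15 0.92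
noncomputable def P₂ : Fin 2 → Fin 2 → ℝ := twoStateMatrix 0.9 0.12
noncomputable def pi₀ : Fin 2 → ℝ := twoStateStationary 0.2 0.2
noncomputable def pi₁ : Fin 2 → ℝ := twoStateStationary 0.15 0.92
noncomputable def pi₂ : Fin 2 → ℝ := twoStateStationary 0.9 0.12

lemma pythagorean_sum_neg :
    (∑ r, ∑ s, pi₀ r * P₀ r s * (log (P₁ s r) - log (P₀ s r))) +
      ∑ r, ∑ s, pi₂ r * P₂ r s * (log (P₀ s r) - log (P₁ s r)) < 0 := by
  have hP₀ : ∀ i j, 0 < P₀ i j := (isStochastic_twoStateMatrix (by norm_num) (by norm_num)).1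
  have hP₁ : ∀ i j, 0 < P₁ i j := (isStochastic_twoStateMatrix (by norm_num) (by norm_num)).1
  have h00 := log_sub_log_le (hP₀ 0 0) (hP₁ 0 0)
  have h01 := one_sub_div_le_log_sub_log (hP₀ 0 1) (hP₁ 0 1)
  have h11 := one_sub_div_le_log_sub_log (hP₀ 1 1) (hP₁ 1 1)
  have h10 : log (P₀ 1 0) - log (P₁ 1 0) = log 10 := by
    rw [← log_div (hP₀ 1 0).ne' (hP₁ 1 0).ne']
    norm_num [P₀, P₁, twoStateMatrix]
  simp only [Fin.sum_univ_two, P₀, P₁, P₂, pi₀, pi₂, twoStateMatrix, twoStateStationary,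
    Matrix.cons_val_zero, Matrix.cons_val_one] at *
  norm_num at *
  linarith [two_lt_log_ten]

end TwoStateMarkov

open TwoStateMarkov

theorem secondLaw_does_not_imply_pythagorean :
    ∃ (P0 P1 P2 : Fin 2 → Fin 2 → ℝ) (pi0 pi1 pi2 : Fin 2 → ℝ)
      (μ0 μ1 μ2 : Measure (Omega 2)),
      IsStochastic P0 ∧ IsStochastic P1 ∧ IsStochastic P2 ∧
      IsStationaryFor pi0 P0 ∧ IsStationaryFor pi1 P1 ∧ IsStationaryFor pi2 P2 ∧
      IsMarkovMeasure μ0 pi0 P0 ∧ IsMarkovMeasure μ1 pi1 P1 ∧ IsMarkovMeasure μ2 pi2 P2 ∧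
      P0 0 0 = 0.2 ∧ P0 1 1 = 0.2 ∧ P1 0 0 = 0.15 ∧ P1 1 1 = 0.92 ∧
      P2 0 0 = 0.9 ∧ P2 1 1 = 0.12 ∧
      (0 < ∫ x, (Real.log (JofP P0 x) - Real.log (JofP P1 x)) *
          ((JofP P2 x - JofP P0 x) / JofP P0 x) ∂μ0) ∧
      ((∫ x, (Real.log (JofP P1 x) - Real.log (JofP P0 x)) ∂μ0) +
          (∫ x, (Real.log (JofP P0 x) - Real.log (JofP P1 x)) ∂μ2) < 0) := by
  have markov {pi : Fin 2 → ℝ} {P : Fin 2 → Fin 2 → ℝ} (hP : IsStochastic P)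
      (hpi : IsStationaryFor pi P) : ∃ μ, IsMarkovMeasure μ pi P :=
    exists_isMarkovMeasure (fun i => (hpi.1 i).le) hpi.2.1 (fun i j => (hP.1 i j).le) hP.2
  have hP₀ : IsStochastic P₀ := isStochastic_twoStateMatrix (by norm_num) (by norm_num)
  have hP₁ : IsStochastic P₁ := isStochastic_twoStateMatrix (by norm_num) (by norm_num)
  have hP₂ : IsStochastic P₂ := isStochastic_twoStateMatrix (by norm_num) (by norm_num)
  have hpi₀ : IsStationaryFor pi₀ P₀ :=
    isStationaryFor_twoStateStationary (by norm_num) (by norm_num)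
  have hpi₁ : IsStationaryFor pi₁ P₁ :=
    isStationaryFor_twoStateStationary (by norm_num) (by norm_num)
  have hpi₂ : IsStationaryFor pi₂ P₂ :=
    isStationaryFor_twoStateStationary (by norm_num) (by norm_num)
  obtain ⟨μ₀, hμ₀⟩ := markov hP₀ hpi₀
  obtain ⟨μ₁, hμ₁⟩ := markov hP₁ hpi₁
  obtain ⟨μ₂, hμ₂⟩ := markov hP₂ hpi₂
  have hsign : ∀ i j, 0 < (P₀ i j - P₁ i j) * (P₂ i j - P₀ i j) := by
    simp only [Fin.forall_fin_two]
    norm_num [P₀, P₁, P₂, twoStateMatrix]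
  refine ⟨P₀, P₁, P₂, pi₀, pi₁, pi₂, μ₀, μ₁, μ₂, hP₀, hP₁, hP₂, hpi₀, hpi₁, hpi₂, hμ₀, hμ₁, hμ₂,
    rfl, rfl, rfl, rfl, rfl, rfl, ?_, ?_⟩
  · simp only [JofP]
    rw [integral_eq_sum_twoCylinders hμ₀ fun i j =>
      (log (P₀ i j) - log (P₁ i j)) * ((P₂ i j - P₀ i j) / P₀ i j)]
    exact secondLaw_sum_pos hpi₀.1 hP₀.1 hP₁.1 hsign
  · simp only [JofP]
    rw [integral_eq_sum_twoCylinders hμ₀ fun i j => log (P₁ i j) - log (P₀ i j),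
        integral_eq_sum_twoCylinders hμ₂ fun i j => log (P₀ i j) - log (P₁ i j)]
    exact pythagorean_sum_neg
end
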